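/- For rationals a, b, c in [0,1), the inequality b ⊖ a ≤ c ⊖ a holds if and only if c ⊖ b ≤ c ⊖ a. -/
import Mathlib

lemma fract_cases (d : ℚ) (h1 : -1 < d) (h2 : d < 1) :
    Int.fract d = if 0 ≤ d then d else d + 1 := by
  split_ifs with h
  · exact Int.fract_eq_self.mpr ⟨h, h2⟩
  · rw [← Int.fract_add_intCast d 1,
        Int.fract_eq_self.mpr ⟨by push_cast; linarith, by push_cast; linarith⟩]
    push_cast; ring

theorem cyclic_diff_le_iff (a b c : ℚ)
    (ha0 : 0 ≤ a) (ha1 : a < 1) (hb0 : 0 ≤ b) (hb1 : b < 1)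
    (hc0 : 0 ≤ c) (hc1 : c < 1) :
    Int.fract (b - a) ≤ Int.fract (c - a) ↔
      Int.fract (c - b) ≤ Int.fract (c - a) := by
  rw [fract_cases (b - a) (by linarith) (by linarith),
      fract_cases (c - a) (by linarith) (by linarith),
      fract_cases (c - b) (by linarith) (by linarith)]
  split_ifs <;> constructor <;> intro <;> linarith
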